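/- arXiv:1805.04965 — 2 statements merged into one kernel-verified Lean document; each statement's English description precedes it below -/
import Mathlib

section
/- Let β₀ > 1 and define β_{i+1} = β₀ − 1/(4β_i). Then β₀ − 1/(4β₀) − Σ_{i=1}^{∞} 1/(4^{i+1} β_i ∏_{j=0}^{i-1} β_j²) > 0, where the infinite series converges. -/
/-!
The recursion gives `β (i + 1) - β (i + 2) = (β i - β (i + 1)) / (4 β i β (i + 1))`, so by induction
the `i`-th term of the series is exactly `β (i + 1) - β (i + 2)`. The series therefore telescopes to
`β 1 - lim β`, and since every `β i` stays above `β 0 - 1/2 > 1/2`, the quantity in question,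
`β 1 - ∑ …`, is at least `β 0 - 1/2 > 0`.
-/

open Finset

theorem Antitone.summable_sub_succ_and_tsum_le {u : ℕ → ℝ} (hu : Antitone u) {m : ℝ}
    (hm : ∀ n, m ≤ u n) :
    Summable (fun i => u i - u (i + 1)) ∧ ∑' i, (u i - u (i + 1)) ≤ u 0 - m := by
  have hnonneg : ∀ i, 0 ≤ u i - u (i + 1) := fun i => sub_nonneg.2 (hu (Nat.le_succ i))
  have hpartial : ∀ n, ∑ i ∈ range n, (u i - u (i + 1)) ≤ u 0 - m := fun n => by
    rw [sum_range_sub']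
    linarith [hm n]
  have hsum := summable_of_sum_range_le hnonneg hpartial
  exact ⟨hsum, hsum.tsum_le_of_sum_range_le hpartial⟩

namespace BetaRecursion

variable {β : ℕ → ℝ} (hrec : ∀ i, β (i + 1) = β 0 - 1 / (4 * β i))
include hrec

theorem sub_half_le (h : 1 ≤ β 0) (i : ℕ) : β 0 - 1 / 2 ≤ β i := by
  induction i with
  | zero => linarith
  | succ n ih =>
    have hinv : 1 / (4 * β n) ≤ 1 / 2 := by
      rw [div_le_div_iff₀ (by linarith) (by norm_num)]
      linarith
    rw [hrec n]
    linarith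

theorem pos (h : 1 ≤ β 0) (i : ℕ) : 0 < β i := by
  linarith [sub_half_le hrec h i]

theorem sub_succ_succ {i : ℕ} (hi : β i ≠ 0) (hi' : β (i + 1) ≠ 0) :
    β (i + 1) - β (i + 2) = (β i - β (i + 1)) / (4 * β i * β (i + 1)) := by
  have hdiff : β (i + 1) - β (i + 2) = 1 / (4 * β (i + 1)) - 1 / (4 * β i) := by
    linarith [hrec i, hrec (i + 1)]
  rw [hdiff]
  field_simp

theorem sub_succ_eq_one_div (h : 1 ≤ β 0) (i : ℕ) :
    β i - β (i + 1) = 1 / (4 ^ (i + 1) * β i * ∏ j ∈ range i, β j ^ 2) := by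
  induction i with
  | zero =>
    rw [hrec 0]
    simp
  | succ n ih =>
    rw [sub_succ_succ hrec (pos hrec h n).ne' (pos hrec h (n + 1)).ne', ih, prod_range_succ,
      div_div]
    ring

theorem antitone (h : 1 ≤ β 0) : Antitone β := by
  refine antitone_nat_of_succ_le fun i => sub_nonneg.1 ?_
  rw [sub_succ_eq_one_div hrec h i]
  have hprod : 0 < ∏ j ∈ range i, β j ^ 2 := prod_pos fun j _ => pow_pos (pos hrec h j) 2
  have := pos hrec h i
  positivity

end BetaRecursion

/-- If `β₀ > 1` and `β_{i+1} = β₀ − 1/(4 β_i)`, then the series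
`Σ_{i≥1} 1/(4^{i+1} β_i ∏_{j=0}^{i-1} β_j²)` converges and
`β₀ − 1/(4β₀) − Σ_{i≥1} 1/(4^{i+1} β_i ∏_{j=0}^{i-1} β_j²) > 0`. -/
theorem beta_series_pos (β : ℕ → ℝ) (h1 : 1 < β 0)
    (hrec : ∀ i, β (i + 1) = β 0 - 1 / (4 * β i)) :
    Summable (fun i : ℕ =>
      1 / (4 ^ (i + 2) * β (i + 1) * ∏ j ∈ Finset.range (i + 1), (β j) ^ 2)) ∧
    0 < β 0 - 1 / (4 * β 0) - ∑' i : ℕ,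
      1 / (4 ^ (i + 2) * β (i + 1) * ∏ j ∈ Finset.range (i + 1), (β j) ^ 2) := by
  have hterm : (fun i : ℕ =>
      1 / (4 ^ (i + 2) * β (i + 1) * ∏ j ∈ Finset.range (i + 1), (β j) ^ 2)) =
      fun i => β (i + 1) - β (i + 1 + 1) :=
    funext fun i => (BetaRecursion.sub_succ_eq_one_div hrec h1.le (i + 1)).symm
  have hanti : Antitone fun n => β (n + 1) :=
    fun _ _ hmn => BetaRecursion.antitone hrec h1.le (Nat.succ_le_succ hmn)
  obtain ⟨hsum, hle⟩ := hanti.summable_sub_succ_and_tsum_le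
    (fun n => BetaRecursion.sub_half_le hrec h1.le (n + 1))
  rw [hterm, ← hrec 0]
  exact ⟨hsum, by linarith⟩
end

section
/- If β₀ ≥ 1 and β_{i+1} = β₀ − 1/(4β_i), then 4β_i β_{i+1} > (1 + 2τ)² for all i ≥ 0, where τ = (√(β₀² − 1) + β₀ − 1)/2. -/
/-- If `β₀ ≥ 1` and `β_{i+1} = β₀ − 1/(4 β_i)`, then
`4 β_i β_{i+1} > (1 + 2τ)²` for all `i`, where `τ = (√(β₀² − 1) + β₀ − 1)/2`. -/
theorem four_beta_mul_gt (β : ℕ → ℝ) (h1 : 1 ≤ β 0)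
    (hrec : ∀ i, β (i + 1) = β 0 - 1 / (4 * β i)) :
    ∀ i, (1 + 2 * ((Real.sqrt ((β 0) ^ 2 - 1) + β 0 - 1) / 2)) ^ 2
      < 4 * β i * β (i + 1) := by
  set s := Real.sqrt ((β 0) ^ 2 - 1) with hs
  have hs0 : 0 ≤ s := Real.sqrt_nonneg _
  have hs2 : s ^ 2 = (β 0) ^ 2 - 1 := Real.sq_sqrt (by nlinarith)
  set L := (β 0 + s) / 2 with hL
  have hLpos : 0 < L := by rw [hL]; linarith
  have hkey : ∀ i, L < β i := by
    intro i
    induction i with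
    | zero =>
      rw [hL]
      nlinarith
    | succ n ih =>
      rw [hrec]
      have hβpos : 0 < β n := lt_trans hLpos ih
      have hlt : 1 / (4 * β n) < 1 / (4 * L) := by
        apply one_div_lt_one_div_of_lt
        · linarith
        · linarith
      have hfix : β 0 - 1 / (4 * L) = L := by
        field_simp
        nlinarith
      linarith
  intro i
  have h1i := hkey i
  have h2i := hkey (i + 1)
  have heq : (1 + 2 * ((s + β 0 - 1) / 2)) = 2 * L := by rw [hL]; ring
  rw [heq]
  nlinarith [hLpos, h1i, h2i]
end
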